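/- arXiv:1209.0731 — 5 statements merged into one kernel-verified Lean document; each statement's English description precedes it below -/
import Mathlib

section
/- Let d ≥ 1 and let A and B be Hermitian d×d complex matrices. Then Tr(e^A) and Tr(e^B) are positive real numbers and |log Tr(e^A) − log Tr(e^B)| ≤ ‖A − B‖, where log is the real logarithm and ‖·‖ denotes the ℓ²-operator norm on matrices. -/
/-!
Let `wᵢ` be an orthonormal eigenbasis of `A`, so that the eigenvalues are `λᵢ = ⟪wᵢ, A wᵢ⟫`.
As `re ⟪v, M v⟫ ≤ ‖M‖` for unit vectors `v`, we have `λᵢ ≤ ‖A - B‖ + re ⟪wᵢ, B wᵢ⟫`.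
Since `exp` lies above its tangent line at `c = re ⟪v, B v⟫`, the functional calculus gives
`e^c (1 - c + B) ≤ e^B`, whence Peierls' inequality `e^(re ⟪v, B v⟫) ≤ re ⟪v, e^B v⟫`.
Summing over `i`, `Tr e^A = ∑ᵢ e^λᵢ ≤ e^‖A - B‖ ∑ᵢ ⟪wᵢ, e^B wᵢ⟫ = e^‖A - B‖ Tr e^B`;
take logarithms and exchange `A` and `B`.
-/

open scoped Matrix.Norms.L2Operator InnerProductSpace MatrixOrder

namespace Matrix

variable {n 𝕜 : Type*} [RCLike 𝕜] [Fintype n] [DecidableEq n]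

lemma trace_toEuclideanLin (M : Matrix n n 𝕜) :
    LinearMap.trace 𝕜 (EuclideanSpace 𝕜 n) (toEuclideanLin M) = M.trace := by
  rw [toEuclideanLin_eq_toLin_orthonormal, trace_toLin_eq]

lemma trace_eq_sum_inner (M : Matrix n n 𝕜) {ι : Type*} [Fintype ι]
    (b : OrthonormalBasis ι 𝕜 (EuclideanSpace 𝕜 n)) :
    M.trace = ∑ i, ⟪b i, toEuclideanLin M (b i)⟫_𝕜 := by
  rw [← trace_toEuclideanLin, LinearMap.trace_eq_sum_inner _ b]

lemma re_inner_toEuclideanLin_le_norm (M : Matrix n n 𝕜) {v : EuclideanSpace 𝕜 n}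
    (hv : ‖v‖ = 1) : RCLike.re ⟪v, toEuclideanLin M v⟫_𝕜 ≤ ‖M‖ :=
  calc RCLike.re ⟪v, toEuclideanLin M v⟫_𝕜 ≤ ‖v‖ * ‖toEuclideanLin M v‖ :=
        (RCLike.re_le_norm _).trans (norm_inner_le_norm _ _)
    _ ≤ ‖v‖ * (‖M‖ * ‖v‖) := by gcongr; exact M.l2_opNorm_mulVec v
    _ = ‖M‖ := by rw [hv, one_mul, mul_one]

lemma re_inner_toEuclideanLin_mono {M N : Matrix n n 𝕜} (h : M ≤ N) (v : EuclideanSpace 𝕜 n) :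
    RCLike.re ⟪v, toEuclideanLin M v⟫_𝕜 ≤ RCLike.re ⟪v, toEuclideanLin N v⟫_𝕜 := by
  have := (isPositive_toEuclideanLin_iff.mpr (le_iff.mp h)).re_inner_nonneg_right v
  simpa [inner_sub_right] using this

namespace IsHermitian

variable {A B : Matrix n n 𝕜}

lemma inner_eigenvectorBasis (hA : A.IsHermitian) (i : n) :
    ⟪hA.eigenvectorBasis i, toEuclideanLin A (hA.eigenvectorBasis i)⟫_𝕜 = hA.eigenvalues i := by
  have h : toEuclideanLin A (hA.eigenvectorBasis i) =
      (hA.eigenvalues i : 𝕜) • hA.eigenvectorBasis i := by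
    apply WithLp.ofLp_injective
    rw [ofLp_toLpLin, toLin'_apply, hA.mulVec_eigenvectorBasis, WithLp.ofLp_smul,
      RCLike.real_smul_eq_coe_smul (K := 𝕜)]
  rw [h, inner_smul_right, inner_self_eq_one_of_norm_eq_one (OrthonormalBasis.norm_eq_one _ i),
    mul_one]

lemma trace_cfc (hA : A.IsHermitian) (f : ℝ → ℝ) :
    (cfc f A).trace = ∑ i, (f (hA.eigenvalues i) : 𝕜) := by
  rw [hA.cfc_eq, IsHermitian.cfc, Unitary.conjStarAlgAut_apply, trace_mul_cycle,
    Unitary.coe_star_mul_self, one_mul, trace_diagonal]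
  rfl

lemma cfc_exp (hA : A.IsHermitian) : cfc Real.exp A = NormedSpace.exp A := by
  -- the L2 operator norm only comes with a `NormedAlgebra 𝕜` instance
  let _ : NormedAlgebra ℝ (Matrix n n 𝕜) :=
    { norm_smul_le r M := by rw [← algebraMap_smul 𝕜 r M]; simpa using norm_smul_le (r : 𝕜) M }
  exact CFC.real_exp_eq_normedSpace_exp hA.isSelfAdjoint

lemma trace_exp (hA : A.IsHermitian) :
    (NormedSpace.exp A).trace = ((∑ i, Real.exp (hA.eigenvalues i) : ℝ) : 𝕜) := by
  rw [← hA.cfc_exp, hA.trace_cfc, RCLike.ofReal_sum]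

lemma im_trace_exp (hA : A.IsHermitian) : RCLike.im (NormedSpace.exp A).trace = 0 := by
  rw [hA.trace_exp, RCLike.ofReal_im]

lemma re_trace_exp_pos [Nonempty n] (hA : A.IsHermitian) :
    0 < RCLike.re (NormedSpace.exp A).trace := by
  rw [hA.trace_exp, RCLike.ofReal_re]
  exact Finset.sum_pos (fun i _ => Real.exp_pos _) Finset.univ_nonempty

lemma re_inner_cfc_affine (hB : B.IsHermitian) (a b : ℝ) (v : EuclideanSpace 𝕜 n) :
    RCLike.re ⟪v, toEuclideanLin (cfc (fun x => a + b * x) B) v⟫_𝕜 =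
      a * ‖v‖ ^ 2 + b * RCLike.re ⟪v, toEuclideanLin B v⟫_𝕜 := by
  rw [cfc_const_add a (fun x => b * x) B, cfc_const_mul_id b B, Algebra.algebraMap_eq_smul_one,
    RCLike.real_smul_eq_coe_smul (K := 𝕜) a, RCLike.real_smul_eq_coe_smul (K := 𝕜) b, map_add,
    map_smul, map_smul, LinearMap.add_apply, LinearMap.smul_apply, LinearMap.smul_apply,
    inner_add_right, inner_smul_right, inner_smul_right]
  simp [inner_self_eq_norm_sq_to_K]

lemma exp_re_inner_le_re_inner_exp (hB : B.IsHermitian) {v : EuclideanSpace 𝕜 n}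
    (hv : ‖v‖ = 1) :
    Real.exp (RCLike.re ⟪v, toEuclideanLin B v⟫_𝕜) ≤
      RCLike.re ⟪v, toEuclideanLin (NormedSpace.exp B) v⟫_𝕜 := by
  set c := RCLike.re ⟪v, toEuclideanLin B v⟫_𝕜
  have tangent : cfc (fun x => Real.exp c * (1 - c) + Real.exp c * x) B ≤ NormedSpace.exp B := by
    rw [← hB.cfc_exp]
    refine cfc_mono fun x _ => ?_
    calc Real.exp c * (1 - c) + Real.exp c * x = Real.exp c * (x - c + 1) := by ring
      _ ≤ Real.exp c * Real.exp (x - c) := by gcongr; exact Real.add_one_le_exp _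
      _ = Real.exp x := by rw [← Real.exp_add, add_sub_cancel]
  have := re_inner_toEuclideanLin_mono tangent v
  rw [re_inner_cfc_affine hB, hv] at this
  linarith

lemma re_trace_exp_le (hA : A.IsHermitian) (hB : B.IsHermitian) :
    RCLike.re (NormedSpace.exp A).trace ≤
      Real.exp ‖A - B‖ * RCLike.re (NormedSpace.exp B).trace := by
  set w := hA.eigenvectorBasis
  calc RCLike.re (NormedSpace.exp A).trace
      = ∑ i, Real.exp (RCLike.re ⟪w i, toEuclideanLin A (w i)⟫_𝕜) := by
        simp [hA.trace_exp, w, hA.inner_eigenvectorBasis]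
    _ ≤ ∑ i, Real.exp ‖A - B‖ * Real.exp (RCLike.re ⟪w i, toEuclideanLin B (w i)⟫_𝕜) := by
        gcongr with i
        rw [← Real.exp_add]
        gcongr
        have := re_inner_toEuclideanLin_le_norm (A - B) (w.norm_eq_one i)
        rw [map_sub, LinearMap.sub_apply, inner_sub_right, map_sub] at this
        linarith
    _ ≤ ∑ i, Real.exp ‖A - B‖ * RCLike.re ⟪w i, toEuclideanLin (NormedSpace.exp B) (w i)⟫_𝕜 := by
        gcongr with i
        exact hB.exp_re_inner_le_re_inner_exp (w.norm_eq_one i)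
    _ = Real.exp ‖A - B‖ * RCLike.re (NormedSpace.exp B).trace := by
        rw [← Finset.mul_sum, trace_eq_sum_inner _ w, map_sum]

lemma log_re_trace_exp_le [Nonempty n] (hA : A.IsHermitian) (hB : B.IsHermitian) :
    Real.log (RCLike.re (NormedSpace.exp A).trace) ≤
      ‖A - B‖ + Real.log (RCLike.re (NormedSpace.exp B).trace) := by
  rw [← Real.log_exp ‖A - B‖, ← Real.log_mul (Real.exp_ne_zero _) hB.re_trace_exp_pos.ne']
  exact Real.log_le_log hA.re_trace_exp_pos (hA.re_trace_exp_le hB)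

end IsHermitian

end Matrix

/-- For `d ≥ 1` and Hermitian `d × d` complex matrices `A`, `B`,
the traces `Tr(e^A)` and `Tr(e^B)` are positive real numbers and
`|log Tr(e^A) − log Tr(e^B)| ≤ ‖A − B‖`, with the ℓ²-operator norm on matrices. -/
theorem trace_exp_log_diff_le (d : ℕ) (hd : 1 ≤ d)
    (A B : Matrix (Fin d) (Fin d) ℂ) (hA : A.IsHermitian) (hB : B.IsHermitian) :
    (0 < (Matrix.trace (NormedSpace.exp A)).re ∧
      (Matrix.trace (NormedSpace.exp A)).im = 0) ∧
    (0 < (Matrix.trace (NormedSpace.exp B)).re ∧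
      (Matrix.trace (NormedSpace.exp B)).im = 0) ∧
    |Real.log (Matrix.trace (NormedSpace.exp A)).re -
        Real.log (Matrix.trace (NormedSpace.exp B)).re| ≤ ‖A - B‖ := by
  have : Nonempty (Fin d) := ⟨⟨0, hd⟩⟩
  refine ⟨⟨hA.re_trace_exp_pos, hA.im_trace_exp⟩, ⟨hB.re_trace_exp_pos, hB.im_trace_exp⟩,
    abs_sub_le_iff.mpr ⟨?_, ?_⟩⟩
  · exact sub_le_iff_le_add.mpr (hA.log_re_trace_exp_le hB)
  · rw [norm_sub_rev]
    exact sub_le_iff_le_add.mpr (hB.log_re_trace_exp_le hA)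
end

section
/- Let ι be a finite nonempty type and let a, b : ι → ℝ. Then |log(∑_{i∈ι} exp(a i)) − log(∑_{i∈ι} exp(b i))| ≤ max_{i∈ι} |a i − b i|. -/
open scoped BigOperators

lemma aux_log_sum_exp_sub_le (ι : Type*) [Fintype ι] [Nonempty ι] (a b : ι → ℝ)
    (M : ℝ) (h : ∀ i, a i - b i ≤ M) :
    Real.log (∑ i, Real.exp (a i)) - Real.log (∑ i, Real.exp (b i)) ≤ M := by
  have hb : (0:ℝ) < ∑ i, Real.exp (b i) :=
    Finset.sum_pos (fun i _ => Real.exp_pos _) Finset.univ_nonempty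
  have hle : (∑ i, Real.exp (a i)) ≤ Real.exp M * ∑ i, Real.exp (b i) := by
    rw [Finset.mul_sum]
    refine Finset.sum_le_sum fun i _ => ?_
    rw [← Real.exp_add]
    exact Real.exp_le_exp.mpr (by linarith [h i])
  have := Real.log_le_log (by positivity) hle
  rw [Real.log_mul (Real.exp_ne_zero _) hb.ne', Real.log_exp] at this
  linarith

/-- For a finite nonempty type `ι` and `a b : ι → ℝ`,
`|log (∑ i, exp (a i)) − log (∑ i, exp (b i))| ≤ max_i |a i − b i|`. -/
theorem abs_log_sum_exp_sub_le (ι : Type*) [Fintype ι] [Nonempty ι] (a b : ι → ℝ) :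
    |Real.log (∑ i, Real.exp (a i)) - Real.log (∑ i, Real.exp (b i))| ≤
      Finset.univ.sup' Finset.univ_nonempty (fun i => |a i - b i|) := by
  set M := Finset.univ.sup' Finset.univ_nonempty (fun i => |a i - b i|) with hM
  have hMi : ∀ i, |a i - b i| ≤ M := fun i =>
    Finset.le_sup' (fun i => |a i - b i|) (Finset.mem_univ i)
  rw [abs_sub_le_iff]
  constructor
  · exact aux_log_sum_exp_sub_le ι a b M fun i => (abs_le.mp (hMi i)).2
  · exact aux_log_sum_exp_sub_le ι b a M fun i => by
      have := (abs_le.mp (hMi i)).1; linarith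
end

section
/- For each integer n ≥ 1 define g_n(K) = n^{−3}·log Z_n(K) for real K (this is well defined since Z_n(K) > 0 for real K). Then there exists a function g : ℝ → ℝ such that g_n converges to g as n → ∞, uniformly on every bounded interval [−M, M] (M > 0). In other words, the free energy per site of the zero-field Ising model on the periodic n×n×n cubic lattice converges uniformly to a limit as the system size becomes infinite, for βJ real and bounded. -/
open scoped BigOperators

/-- The sites of the periodic `n × n × n` cubic lattice: the discrete 3-torus. -/
abbrev Site (n : ℕ) : Type := ZMod n × ZMod n × ZMod n

/-- A spin configuration: a function assigning to each site a spin in `{-1, 1} ⊆ ℤ`. -/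
abbrev SpinCfg (n : ℕ) : Type := Site n → ({-1, 1} : Finset ℤ)

/-- The bond sum `S(σ) = ∑_i ∑_{α=1}^3 σ(i)·σ(i+e_α)`, each of the `3n³`
nearest-neighbor bonds of the torus counted once. -/
def bondSum : (n : ℕ) → SpinCfg n → ℤ
  | 0, _ => 0
  | n + 1, σ =>
      ∑ i : Site (n + 1),
        ((σ i : ℤ) * (σ (i + (1, 0, 0)) : ℤ) + (σ i : ℤ) * (σ (i + (0, 1, 0)) : ℤ) +
          (σ i : ℤ) * (σ (i + (0, 0, 1)) : ℤ))

/-- The zero-field partition function `Z_n(K) = ∑_σ exp (K * S σ)`, for complex `K`. -/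
noncomputable def Zc : (n : ℕ) → ℂ → ℂ
  | 0, _ => 0
  | n + 1, K => ∑ σ : SpinCfg (n + 1), Complex.exp (K * (bondSum (n + 1) σ : ℂ))

/-- The zero-field partition function for real `K`. -/
noncomputable def Zr : (n : ℕ) → ℝ → ℝ
  | 0, _ => 0
  | n + 1, K => ∑ σ : SpinCfg (n + 1), Real.exp (K * (bondSum (n + 1) σ : ℝ))

/-- The free energy per site `g_n(K) = n⁻³ log Z_n(K)` for real `K`. -/
noncomputable def g : (n : ℕ) → ℝ → ℝ
  | 0, _ => 0
  | n + 1, K => Real.log (Zr (n + 1) K) / ((n : ℝ) + 1) ^ 3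

/-- Thermal expectation `⟨A⟩_n = Z_n(K)⁻¹ ∑_σ A σ * exp (K * S σ)`, real version. -/
noncomputable def expec : (n : ℕ) → ℝ → ((SpinCfg n) → ℝ) → ℝ
  | 0, _, _ => 0
  | n + 1, K, A =>
      (∑ σ : SpinCfg (n + 1), A σ * Real.exp (K * (bondSum (n + 1) σ : ℝ))) / Zr (n + 1) K

/-- Numerator `∑_σ (∏_{i ∈ T} σ i) exp (K * S σ)` of the correlation of the set `T` of sites. -/
noncomputable def corrNum : (n : ℕ) → Finset (Site n) → ℂ → ℂ
  | 0, _, _ => 0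
  | n + 1, T, K =>
      ∑ σ : SpinCfg (n + 1), (∏ i ∈ T, ((σ i : ℤ) : ℂ)) * Complex.exp (K * (bondSum (n + 1) σ : ℂ))

/-- The correlation function `C_{n,T}(K)` of a finite set `T` of sites. -/
noncomputable def corr (n : ℕ) (T : Finset (Site n)) (K : ℂ) : ℂ := corrNum n T K / Zc n K

/-!
Cut the torus of side `m * n` into `m ^ 3` blocks that are tori of side `n`. The bond sum of
the big torus differs from the sum of the bond sums of the blocks only through bonds leaving
a block, at most `3 n²` per block, so `|log Z_{mn} - m³ log Z_n| ≤ 18 |K| m³ n²` and hence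
`|g_{mn}(K) - g_n(K)| ≤ 18 |K| / n`. Comparing `g_p` and `g_q` through `g_{pq}` shows that
`(g_n)` is uniformly Cauchy on `[-M, M]`.
-/

open Finset Filter Topology Real

lemma ZMod.val_add_one_of_ne_neg_one {n : ℕ} [NeZero n] {r : ZMod n} (h : r ≠ -1) :
    (r + 1).val = r.val + 1 := by
  obtain ⟨k, rfl⟩ := Nat.exists_eq_succ_of_ne_zero (NeZero.ne n)
  have hr : r.val ≠ k := fun hr => h (ZMod.val_injective _ (hr.trans (ZMod.val_neg_one k).symm))
  have := ZMod.val_lt r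
  rw [ZMod.val_add_of_lt] <;> rw [ZMod.val_one'' (by omega)]
  omega

lemma ZMod.val_mul_add_val_lt {m n : ℕ} [NeZero m] [NeZero n] (q : ZMod m) (r : ZMod n) :
    q.val * n + r.val < m * n := by
  have := ZMod.val_lt q
  have := ZMod.val_lt r
  nlinarith

def ZMod.blockEquiv (m n : ℕ) [NeZero m] [NeZero n] : ZMod m × ZMod n ≃ ZMod (m * n) where
  toFun p := ((p.1.val * n + p.2.val : ℕ) : ZMod (m * n))
  invFun i := ((i.val / n : ℕ), (i.val : ZMod n))
  left_inv := by
    rintro ⟨q, r⟩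
    dsimp only
    rw [ZMod.val_natCast_of_lt (ZMod.val_mul_add_val_lt q r), Nat.mul_comm,
      Nat.mul_add_div (NeZero.pos n), Nat.div_eq_of_lt (ZMod.val_lt r)]
    simp
  right_inv i := by
    have hi : i.val / n < m := Nat.div_lt_of_lt_mul ((ZMod.val_lt i).trans_eq (Nat.mul_comm m n))
    dsimp only
    rw [ZMod.val_natCast_of_lt hi, ZMod.val_natCast, Nat.div_add_mod', ZMod.natCast_zmod_val]

lemma ZMod.blockEquiv_add_one {m n : ℕ} [NeZero m] [NeZero n] (q : ZMod m) {r : ZMod n}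
    (hr : r ≠ -1) : blockEquiv m n (q, r + 1) = blockEquiv m n (q, r) + 1 := by
  show ((q.val * n + (r + 1).val : ℕ) : ZMod (m * n)) =
    ((q.val * n + r.val : ℕ) : ZMod (m * n)) + 1
  rw [ZMod.val_add_one_of_ne_neg_one hr]
  push_cast
  ring

def siteBlockEquiv (m n : ℕ) [NeZero m] [NeZero n] : Site m × Site n ≃ Site (m * n) where
  toFun p := (ZMod.blockEquiv m n (p.1.1, p.2.1), ZMod.blockEquiv m n (p.1.2.1, p.2.2.1),
    ZMod.blockEquiv m n (p.1.2.2, p.2.2.2))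
  invFun i :=
    let a := (ZMod.blockEquiv m n).symm i.1
    let b := (ZMod.blockEquiv m n).symm i.2.1
    let c := (ZMod.blockEquiv m n).symm i.2.2
    ((a.1, b.1, c.1), (a.2, b.2, c.2))
  left_inv := by rintro ⟨⟨a, b, c⟩, ⟨x, y, z⟩⟩; simp
  right_inv := by rintro ⟨a, b, c⟩; simp

def cfgBlockEquiv (m n : ℕ) [NeZero m] [NeZero n] : SpinCfg (m * n) ≃ (Site m → SpinCfg n) :=
  (Equiv.arrowCongr (siteBlockEquiv m n).symm (Equiv.refl _)).trans (Equiv.curry _ _ _)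

@[simp]
lemma cfgBlockEquiv_apply {m n : ℕ} [NeZero m] [NeZero n] (σ : SpinCfg (m * n)) (b : Site m)
    (x : Site n) : cfgBlockEquiv m n σ b x = σ (siteBlockEquiv m n (b, x)) := rfl

lemma card_site (n : ℕ) [NeZero n] : Fintype.card (Site n) = n ^ 3 := by
  simp only [Fintype.card_prod, ZMod.card]
  ring

def bondTerm {k : ℕ} (σ : SpinCfg k) (i : Site k) : ℤ :=
  σ i * σ (i + (1, 0, 0)) + σ i * σ (i + (0, 1, 0)) + σ i * σ (i + (0, 0, 1))

lemma bondSum_eq_sum_bondTerm (k : ℕ) [NeZero k] (σ : SpinCfg k) :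
    bondSum k σ = ∑ i, bondTerm σ i := by
  obtain ⟨j, rfl⟩ := Nat.exists_eq_succ_of_ne_zero (NeZero.ne k)
  rfl

lemma abs_spin {k : ℕ} (σ : SpinCfg k) (i : Site k) : |(σ i : ℤ)| = 1 := by
  have := (σ i).2
  simp only [Finset.mem_insert, Finset.mem_singleton] at this
  rcases this with h | h <;> simp [h]

lemma abs_bondTerm_le {k : ℕ} (σ : SpinCfg k) (i : Site k) : |bondTerm σ i| ≤ 3 := by
  refine (abs_add_three _ _ _).trans ?_
  simp only [abs_mul, abs_spin]
  norm_num

-- Forward bonds from any other site stay inside the block of that site.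
def boundary (n : ℕ) [NeZero n] : Finset (Site n) := {x | x.1 = -1 ∨ x.2.1 = -1 ∨ x.2.2 = -1}

lemma card_boundary_le (n : ℕ) [NeZero n] : #(boundary n) ≤ 3 * n ^ 2 := by
  have h₁ : ({x | x.1 = -1} : Finset (Site n)) = {-1} ×ˢ univ := by
    ext ⟨a, b, c⟩; simp [eq_comm]
  have h₂ : ({x | x.2.1 = -1} : Finset (Site n)) = univ ×ˢ {-1} ×ˢ univ := by
    ext ⟨a, b, c⟩; simp [eq_comm]
  have h₃ : ({x | x.2.2 = -1} : Finset (Site n)) = univ ×ˢ univ ×ˢ {-1} := by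
    ext ⟨a, b, c⟩; simp [eq_comm]
  unfold boundary
  rw [filter_or, filter_or]
  grw [card_union_le, card_union_le, h₁, h₂, h₃]
  simp only [card_product, card_singleton, card_univ, Fintype.card_prod, ZMod.card]
  exact le_of_eq (by ring)

lemma bondTerm_cfgBlockEquiv {m n : ℕ} [NeZero m] [NeZero n] (σ : SpinCfg (m * n)) (b : Site m)
    {x : Site n} (hx : x ∉ boundary n) :
    bondTerm (cfgBlockEquiv m n σ b) x = bondTerm σ (siteBlockEquiv m n (b, x)) := by
  simp only [boundary, mem_filter, mem_univ, true_and, not_or] at hx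
  obtain ⟨h₁, h₂, h₃⟩ := hx
  simp [bondTerm, siteBlockEquiv, ZMod.blockEquiv_add_one _ h₁, ZMod.blockEquiv_add_one _ h₂,
    ZMod.blockEquiv_add_one _ h₃]

lemma abs_sum_sub_sum_le_of_eqOn_compl {ι R : Type*} [Fintype ι] [AddCommGroup R] [LinearOrder R]
    [IsOrderedAddMonoid R] (s : Finset ι) {f h : ι → R} {c : R} (hs : ∀ i ∉ s, f i = h i)
    (hc : ∀ i ∈ s, |f i - h i| ≤ c) : |∑ i, f i - ∑ i, h i| ≤ #s • c := by
  rw [← sum_sub_distrib, ← sum_subset (subset_univ s) fun i _ hi => sub_eq_zero.2 (hs i hi)]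
  exact (abs_sum_le_sum_abs _ _).trans (sum_le_card_nsmul _ _ _ hc)

lemma abs_bondSum_sub_sum_blocks_le (m n : ℕ) [NeZero m] [NeZero n] (σ : SpinCfg (m * n)) :
    |bondSum (m * n) σ - ∑ b, bondSum n (cfgBlockEquiv m n σ b)| ≤ 18 * m ^ 3 * n ^ 2 := by
  have hblock (b : Site m) : |∑ x, bondTerm σ (siteBlockEquiv m n (b, x)) -
      ∑ x, bondTerm (cfgBlockEquiv m n σ b) x| ≤ 18 * n ^ 2 := by
    have hdiff (x : Site n) : |bondTerm σ (siteBlockEquiv m n (b, x)) -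
        bondTerm (cfgBlockEquiv m n σ b) x| ≤ 6 :=
      (abs_sub _ _).trans (add_le_add (abs_bondTerm_le _ _) (abs_bondTerm_le _ _))
    refine (abs_sum_sub_sum_le_of_eqOn_compl (boundary n)
      (fun x hx => (bondTerm_cfgBlockEquiv σ b hx).symm) fun x _ => hdiff x).trans ?_
    rw [nsmul_eq_mul]
    have : (#(boundary n) : ℤ) ≤ 3 * n ^ 2 := by exact_mod_cast card_boundary_le n
    linarith
  simp only [bondSum_eq_sum_bondTerm]
  rw [← (siteBlockEquiv m n).sum_comp, Fintype.sum_prod_type, ← sum_sub_distrib]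
  refine (abs_sum_le_sum_abs _ _).trans ((sum_le_sum fun b _ => hblock b).trans ?_)
  rw [sum_const, card_univ, card_site, nsmul_eq_mul]
  push_cast
  exact le_of_eq (by ring)

instance : Nonempty ({-1, 1} : Finset ℤ) := ⟨⟨1, by simp⟩⟩

lemma Zr_eq_sum (k : ℕ) [NeZero k] (K : ℝ) :
    Zr k K = ∑ σ : SpinCfg k, exp (K * bondSum k σ) := by
  obtain ⟨j, rfl⟩ := Nat.exists_eq_succ_of_ne_zero (NeZero.ne k)
  rfl

lemma g_eq (k : ℕ) [NeZero k] (K : ℝ) : g k K = log (Zr k K) / (k : ℝ) ^ 3 := by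
  obtain ⟨j, rfl⟩ := Nat.exists_eq_succ_of_ne_zero (NeZero.ne k)
  simp [g]

lemma sum_exp_sum_blocks (m n : ℕ) [NeZero m] [NeZero n] (K : ℝ) :
    ∑ σ : SpinCfg (m * n), exp (K * ∑ b, (bondSum n (cfgBlockEquiv m n σ b) : ℝ)) =
      Zr n K ^ m ^ 3 := by
  rw [(cfgBlockEquiv m n).sum_comp fun τ => exp (K * ∑ b, (bondSum n (τ b) : ℝ))]
  simp_rw [mul_sum, Real.exp_sum]
  rw [← Fintype.prod_sum fun _ τ => exp (K * bondSum n τ), prod_const, card_univ, card_site,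
    Zr_eq_sum]

lemma log_sum_exp_le_of_le {ι : Type*} [Fintype ι] [Nonempty ι] {H H' : ι → ℝ} {D : ℝ}
    (h : ∀ i, H i ≤ H' i + D) :
    log (∑ i, exp (H i)) ≤ log (∑ i, exp (H' i)) + D := by
  have hle : ∑ i, exp (H i) ≤ Real.exp D * ∑ i, exp (H' i) := by
    rw [mul_sum]
    exact sum_le_sum fun i _ => by rw [← Real.exp_add, add_comm]; exact Real.exp_le_exp.2 (h i)
  have hpos : 0 < ∑ i, exp (H' i) := sum_pos (fun i _ => Real.exp_pos _) univ_nonempty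
  calc log (∑ i, exp (H i))
      ≤ log (Real.exp D * ∑ i, exp (H' i)) :=
        Real.log_le_log (sum_pos (fun i _ => Real.exp_pos _) univ_nonempty) hle
    _ = log (∑ i, exp (H' i)) + D := by
        rw [Real.log_mul (Real.exp_pos D).ne' hpos.ne', Real.log_exp, add_comm]

lemma abs_log_sum_exp_sub_le_s2 {ι : Type*} [Fintype ι] [Nonempty ι] {H H' : ι → ℝ} {D : ℝ}
    (h : ∀ i, |H i - H' i| ≤ D) :
    |log (∑ i, exp (H i)) - log (∑ i, exp (H' i))| ≤ D := by
  refine abs_sub_le_iff.2 ⟨?_, ?_⟩ <;> rw [sub_le_iff_le_add']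
  · exact log_sum_exp_le_of_le fun i => by linarith [(abs_le.1 (h i)).2]
  · exact log_sum_exp_le_of_le fun i => by linarith [(abs_le.1 (h i)).1]

lemma abs_log_Zr_mul_sub_le (m n : ℕ) [NeZero m] [NeZero n] (K : ℝ) :
    |log (Zr (m * n) K) - m ^ 3 * log (Zr n K)| ≤ 18 * |K| * m ^ 3 * n ^ 2 := by
  have hcompare (σ : SpinCfg (m * n)) :
      |K * bondSum (m * n) σ - K * ∑ b, (bondSum n (cfgBlockEquiv m n σ b) : ℝ)| ≤
        18 * |K| * m ^ 3 * n ^ 2 := by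
    have hσ : |(bondSum (m * n) σ : ℝ) - ∑ b, (bondSum n (cfgBlockEquiv m n σ b) : ℝ)| ≤
        18 * m ^ 3 * n ^ 2 := by exact_mod_cast abs_bondSum_sub_sum_blocks_le m n σ
    rw [← mul_sub, abs_mul]
    linarith [mul_le_mul_of_nonneg_left hσ (abs_nonneg K)]
  have := abs_log_sum_exp_sub_le_s2 hcompare
  rwa [← Zr_eq_sum, sum_exp_sum_blocks, Real.log_pow, Nat.cast_pow] at this

lemma abs_g_mul_sub_le (m n : ℕ) [NeZero m] [NeZero n] (K : ℝ) :
    |g (m * n) K - g n K| ≤ 18 * |K| / n := by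
  have hm : (0 : ℝ) < m := by exact_mod_cast NeZero.pos m
  have hn : (0 : ℝ) < n := by exact_mod_cast NeZero.pos n
  have hsplit : g (m * n) K - g n K =
      (log (Zr (m * n) K) - m ^ 3 * log (Zr n K)) / (m ^ 3 * n ^ 3) := by
    rw [g_eq, g_eq]
    push_cast
    field_simp
  rw [hsplit, abs_div, abs_of_pos (show (0 : ℝ) < m ^ 3 * n ^ 3 by positivity),
    div_le_div_iff₀ (by positivity) hn]
  calc _ ≤ 18 * |K| * m ^ 3 * n ^ 2 * n := by gcongr; exact abs_log_Zr_mul_sub_le m n K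
    _ = 18 * |K| * (m ^ 3 * n ^ 3) := by ring

lemma abs_g_sub_le (p q : ℕ) [NeZero p] [NeZero q] (K : ℝ) :
    |g p K - g q K| ≤ 18 * |K| / p + 18 * |K| / q := by
  have hp := abs_g_mul_sub_le q p K
  have hq := abs_g_mul_sub_le p q K
  rw [Nat.mul_comm] at hp
  calc |g p K - g q K| = |(g (p * q) K - g q K) - (g (p * q) K - g p K)| := by ring_nf
    _ ≤ |g (p * q) K - g p K| + |g (p * q) K - g q K| := by rw [add_comm]; exact abs_sub _ _
    _ ≤ _ := add_le_add hp hq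

lemma uniformCauchySeqOn_g (M : ℝ) : UniformCauchySeqOn g atTop (Set.Icc (-M) M) := by
  rw [Metric.uniformCauchySeqOn_iff]
  intro ε hε
  have hsmall : ∀ᶠ p : ℕ in atTop, 1 ≤ p ∧ 18 * M / p < ε / 2 :=
    (eventually_ge_atTop 1).and
      ((tendsto_const_div_atTop_nhds_zero_nat (18 * M)).eventually (gt_mem_nhds (half_pos hε)))
  obtain ⟨N, hN⟩ := eventually_atTop.1 hsmall
  refine ⟨N, fun p hp q hq K hK => ?_⟩
  obtain ⟨hp₁, hpε⟩ := hN p hp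
  obtain ⟨hq₁, hqε⟩ := hN q hq
  have : NeZero p := ⟨by omega⟩
  have : NeZero q := ⟨by omega⟩
  have hKM : |K| ≤ M := abs_le.2 hK
  calc dist (g p K) (g q K) ≤ 18 * |K| / p + 18 * |K| / q := abs_g_sub_le p q K
    _ ≤ 18 * M / p + 18 * M / q := by gcongr
    _ < ε := by linarith

/-- The free energy per site `g_n(K) = n⁻³ log Z_n(K)` of the zero-field
Ising model on the periodic `n × n × n` cubic lattice converges, as `n → ∞`, to a limit
function `g`, uniformly on every bounded interval `[-M, M]` of real `K = βJ`. -/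
theorem freeEnergy_tendstoUniformly :
    ∃ gLim : ℝ → ℝ, ∀ M : ℝ, 0 < M →
      TendstoUniformlyOn (fun n K => g n K) gLim Filter.atTop (Set.Icc (-M) M) :=
  ⟨fun K => limUnder atTop (g · K), fun M _ =>
    (uniformCauchySeqOn_g M).tendstoUniformlyOn_of_tendsto fun _ hK =>
      ((uniformCauchySeqOn_g M).cauchySeq hK).tendsto_limUnder⟩
end

section
/- (Suzuki's correlation identity.) Let n ≥ 3, let K be real, and let j₁, …, j_m (m ≥ 1) be m distinct sites of the torus (ZMod n)³. Then ⟨∏_{i=1}^m σ(j_i)⟩_n = (1/m)·∑_{k=1}^m ⟨(∏_{i=1, i≠k}^m σ(j_i)) · tanh(K·∑_{α=1}^{3}(σ(j_k+e_α) + σ(j_k−e_α)))⟩_n, where the inner sum runs over the six nearest neighbors of j_k. Moreover the identity already holds without the average over k, i.e. for each fixed k ∈ {1,…,m}. -/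
open scoped BigOperators

/-- Sum of the six nearest-neighbor spins of the site `x`. -/
def nbrSum {n : ℕ} (σ : SpinCfg n) (x : Site n) : ℤ :=
  (σ (x + (1, 0, 0)) : ℤ) + (σ (x - (1, 0, 0)) : ℤ) +
  (σ (x + (0, 1, 0)) : ℤ) + (σ (x - (0, 1, 0)) : ℤ) +
  (σ (x + (0, 0, 1)) : ℤ) + (σ (x - (0, 0, 1)) : ℤ)

/-!
Flipping the spin at `x` is an involution of the configurations that negates `σ x`, fixes all
other spins, and multiplies the Boltzmann weight by `exp (-2 σ(x) K h)`, where `h` is the sum of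
the six neighbouring spins of `x`. Since `σ x = ±1`, on each orbit `{σ, σ'}` of the flip the weights
satisfy `σ x (w - w') = tanh (K h) (w + w')`. Summing over orbits replaces `σ x` by `tanh (K h)`
inside any thermal average whose remaining factor is flip-invariant, as `∏_{i ≠ k} σ(jᵢ)` is
for distinct sites.
-/

open Function

theorem Function.update_neg_eq_sub_single {G R : Type*} [DecidableEq G] [Ring R] (s : G → R)
    (x : G) : update s x (-s x) = s - Pi.single x (2 * s x) := by
  ext i
  rcases eq_or_ne i x with rfl | hi
  · simp [two_mul]
  · simp [hi]

theorem Fintype.sum_mul_shift_update_neg {G R : Type*} [AddCommGroup G] [Fintype G]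
    [DecidableEq G] [CommRing R] (s : G → R) {x e : G} (he : e ≠ 0) :
    ∑ i, update s x (-s x) i * update s x (-s x) (i + e) =
      ∑ i, s i * s (i + e) - 2 * s x * (s (x + e) + s (x - e)) := by
  set d : G → R := Pi.single x (2 * s x) with hd
  have hshift : ∀ i, i + e = x ↔ i = x - e := fun i => eq_sub_iff_add_eq.symm
  -- no bond in direction `e ≠ 0` joins `x` to itself
  have hcross : ∀ i, d i * d (i + e) = 0 := by
    intro i
    rcases eq_or_ne i x with rfl | hi
    · simp [hd, he]
    · simp [hd, hi]
  simp only [update_neg_eq_sub_single, ← hd, Pi.sub_apply, sub_mul, mul_sub,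
    Finset.sum_sub_distrib, hcross]
  simp [hd, Pi.single_apply, hshift]
  ring

theorem Fintype.sum_eq_sum_of_involutive {α M : Type*} [Fintype α] [AddCommMonoid M]
    [IsAddTorsionFree M] {ι : α → α} (hι : Involutive ι) {f g : α → M}
    (h : ∀ a, f a + f (ι a) = g a + g (ι a)) : ∑ a, f a = ∑ a, g a := by
  have hsum : ∀ φ : α → M, ∑ a, φ (ι a) = ∑ a, φ a := fun φ => Equiv.sum_comp hι.toPerm φ
  apply IsAddTorsionFree.nsmul_right_injective two_ne_zero
  simp only [two_nsmul]
  calc ∑ a, f a + ∑ a, f a = ∑ a, (f a + f (ι a)) := by rw [Finset.sum_add_distrib, hsum]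
    _ = ∑ a, (g a + g (ι a)) := Finset.sum_congr rfl fun a _ => h a
    _ = ∑ a, g a + ∑ a, g a := by rw [Finset.sum_add_distrib, hsum]

theorem Real.tanh_mul_one_add_exp (t : ℝ) :
    Real.tanh t * (1 + Real.exp (-2 * t)) = 1 - Real.exp (-2 * t) := by
  have hexp : Real.exp (-2 * t) = Real.exp (-t) / Real.exp t := by
    rw [← Real.exp_sub]; ring_nf
  rw [Real.tanh_eq, hexp]
  field_simp

theorem Real.mul_one_sub_exp_eq_tanh_mul {s : ℝ} (hs : s = -1 ∨ s = 1) (t : ℝ) :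
    s * (1 - Real.exp (-2 * s * t)) = Real.tanh t * (1 + Real.exp (-2 * s * t)) := by
  rcases hs with rfl | rfl
  · have := Real.tanh_mul_one_add_exp (-t)
    rw [Real.tanh_neg] at this
    ring_nf at this ⊢
    linarith
  · simpa using (Real.tanh_mul_one_add_exp t).symm

namespace SpinCfg

def negSpin (s : ({-1, 1} : Finset ℤ)) : ({-1, 1} : Finset ℤ) :=
  ⟨-s, by
    have hs := s.2
    simp only [Finset.mem_insert, Finset.mem_singleton] at hs ⊢
    omega⟩

@[simp]
theorem coe_negSpin (s : ({-1, 1} : Finset ℤ)) : (negSpin s : ℤ) = -s := rfl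

theorem spin_eq_neg_one_or_one (s : ({-1, 1} : Finset ℤ)) :
    ((s : ℤ) : ℝ) = -1 ∨ ((s : ℤ) : ℝ) = 1 := by
  rcases Finset.mem_insert.1 s.2 with h | h
  · left; simp [h]
  · right; simp [Finset.mem_singleton.1 h]

variable {n : ℕ}

def flipAt (x : Site n) (σ : SpinCfg n) : SpinCfg n := update σ x (negSpin (σ x))

theorem flipAt_involutive (x : Site n) : Involutive (flipAt x) := by
  intro σ
  ext i
  rcases eq_or_ne i x with rfl | hi
  · simp [flipAt]
  · simp [flipAt, hi]

@[simp]
theorem flipAt_self (x : Site n) (σ : SpinCfg n) : (flipAt x σ x : ℤ) = -σ x := by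
  simp [flipAt]

theorem flipAt_of_ne {x y : Site n} (h : y ≠ x) (σ : SpinCfg n) : flipAt x σ y = σ y :=
  update_of_ne h _ _

theorem coe_flipAt (x : Site n) (σ : SpinCfg n) (i : Site n) :
    (flipAt x σ i : ℤ) = update (fun i => (σ i : ℤ)) x (-σ x) i := by
  rcases eq_or_ne i x with rfl | hi
  · simp
  · simp [flipAt_of_ne hi, hi]

section Nontrivial

variable [Nontrivial (ZMod n)]

theorem unitVec_ne_zero :
    ((1, 0, 0) : Site n) ≠ 0 ∧ ((0, 1, 0) : Site n) ≠ 0 ∧ ((0, 0, 1) : Site n) ≠ 0 := by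
  simp [Prod.ext_iff]

theorem nbrSum_flipAt (x : Site n) (σ : SpinCfg n) : nbrSum (flipAt x σ) x = nbrSum σ x := by
  have hadd : ∀ e : Site n, e ≠ 0 → x + e ≠ x := fun e he => add_ne_left.2 he
  have hsub : ∀ e : Site n, e ≠ 0 → x - e ≠ x := fun e he => mt sub_eq_self.1 he
  obtain ⟨e₁, e₂, e₃⟩ := unitVec_ne_zero (n := n)
  simp only [nbrSum, flipAt_of_ne (hadd _ e₁), flipAt_of_ne (hsub _ e₁),
    flipAt_of_ne (hadd _ e₂), flipAt_of_ne (hsub _ e₂),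
    flipAt_of_ne (hadd _ e₃), flipAt_of_ne (hsub _ e₃)]

end Nontrivial

theorem bondSum_flipAt [Nontrivial (ZMod (n + 1))] (x : Site (n + 1))
    (σ : SpinCfg (n + 1)) :
    bondSum (n + 1) (flipAt x σ) = bondSum (n + 1) σ - 2 * σ x * nbrSum σ x := by
  have hbond : ∀ e : Site (n + 1), e ≠ 0 →
      ∑ i, (flipAt x σ i : ℤ) * (flipAt x σ (i + e) : ℤ) =
        ∑ i, (σ i : ℤ) * (σ (i + e) : ℤ) - 2 * σ x * (σ (x + e) + σ (x - e)) := by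
    intro e he
    simp only [coe_flipAt]
    exact Fintype.sum_mul_shift_update_neg _ he
  obtain ⟨e₁, e₂, e₃⟩ := unitVec_ne_zero (n := n + 1)
  simp only [bondSum, Finset.sum_add_distrib, hbond _ e₁, hbond _ e₂, hbond _ e₃, nbrSum]
  ring

theorem sum_spin_mul_weight_eq_sum_tanh_mul_weight [Nontrivial (ZMod (n + 1))]
    (K : ℝ) (x : Site (n + 1)) {P : SpinCfg (n + 1) → ℝ} (hP : ∀ σ, P (flipAt x σ) = P σ) :
    ∑ σ : SpinCfg (n + 1), P σ * ((σ x : ℤ) : ℝ) * Real.exp (K * (bondSum (n + 1) σ : ℝ)) =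
      ∑ σ : SpinCfg (n + 1),
        P σ * Real.tanh (K * (nbrSum σ x : ℝ)) * Real.exp (K * (bondSum (n + 1) σ : ℝ)) := by
  refine Fintype.sum_eq_sum_of_involutive (flipAt_involutive x) fun σ => ?_
  have hweight : Real.exp (K * (bondSum (n + 1) (flipAt x σ) : ℝ)) =
      Real.exp (K * (bondSum (n + 1) σ : ℝ)) *
        Real.exp (-2 * ((σ x : ℤ) : ℝ) * (K * (nbrSum σ x : ℝ))) := by
    rw [← Real.exp_add, bondSum_flipAt]
    push_cast
    ring_nf
  simp only [hP, flipAt_self, nbrSum_flipAt, hweight, Int.cast_neg]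
  linear_combination P σ * Real.exp (K * (bondSum (n + 1) σ : ℝ)) *
    Real.mul_one_sub_exp_eq_tanh_mul (spin_eq_neg_one_or_one (σ x)) (K * (nbrSum σ x : ℝ))

theorem expec_mul_spin_eq_expec_mul_tanh [Nontrivial (ZMod n)] (K : ℝ) (x : Site n)
    {P : SpinCfg n → ℝ} (hP : ∀ σ, P (flipAt x σ) = P σ) :
    expec n K (fun σ => P σ * ((σ x : ℤ) : ℝ)) =
      expec n K (fun σ => P σ * Real.tanh (K * (nbrSum σ x : ℝ))) := by
  cases n with
  | zero => rfl
  | succ n => rw [expec, expec, sum_spin_mul_weight_eq_sum_tanh_mul_weight K x hP]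

end SpinCfg

/-- Suzuki's correlation identity: for `n ≥ 3`, real `K`, and `m ≥ 1`
distinct sites `j₁, …, j_m` of the torus,
`⟨∏ᵢ σ(jᵢ)⟩ₙ = (1/m) ∑ₖ ⟨(∏_{i≠k} σ(jᵢ)) tanh(K ∑_{nn of j_k} σ)⟩ₙ`,
and moreover the identity holds for each fixed `k` without the average. -/
theorem suzuki_identity (n : ℕ) (hn : 3 ≤ n) (K : ℝ) (m : ℕ) (hm : 1 ≤ m)
    (j : Fin m → Site n) (hj : Function.Injective j) :
    (expec n K (fun σ => ∏ i : Fin m, ((σ (j i) : ℤ) : ℝ)) =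
      (1 / (m : ℝ)) * ∑ k : Fin m,
        expec n K (fun σ =>
          (∏ i ∈ Finset.univ.erase k, ((σ (j i) : ℤ) : ℝ)) *
            Real.tanh (K * (nbrSum σ (j k) : ℝ)))) ∧
    ∀ k : Fin m,
      expec n K (fun σ => ∏ i : Fin m, ((σ (j i) : ℤ) : ℝ)) =
        expec n K (fun σ =>
          (∏ i ∈ Finset.univ.erase k, ((σ (j i) : ℤ) : ℝ)) *
            Real.tanh (K * (nbrSum σ (j k) : ℝ))) := by
  have : Fact (1 < n) := ⟨by omega⟩
  have hfixed : ∀ k : Fin m,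
      expec n K (fun σ => ∏ i : Fin m, ((σ (j i) : ℤ) : ℝ)) =
        expec n K (fun σ =>
          (∏ i ∈ Finset.univ.erase k, ((σ (j i) : ℤ) : ℝ)) *
            Real.tanh (K * (nbrSum σ (j k) : ℝ))) := by
    intro k
    have hP : ∀ σ, ∏ i ∈ Finset.univ.erase k, ((SpinCfg.flipAt (j k) σ (j i) : ℤ) : ℝ) =
        ∏ i ∈ Finset.univ.erase k, ((σ (j i) : ℤ) : ℝ) := fun σ =>
      Finset.prod_congr rfl fun i hi => by
        rw [SpinCfg.flipAt_of_ne (hj.ne (Finset.ne_of_mem_erase hi))]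
    simp only [← Finset.prod_erase_mul Finset.univ _ (Finset.mem_univ k)]
    exact SpinCfg.expec_mul_spin_eq_expec_mul_tanh K (j k) hP
  refine ⟨?_, hfixed⟩
  have hm₀ : (m : ℝ) ≠ 0 := Nat.cast_ne_zero.2 (by omega)
  rw [← Finset.sum_congr rfl fun k _ => hfixed k, Finset.sum_const, Finset.card_univ,
    Fintype.card_fin, nsmul_eq_mul]
  field_simp
end

section
/- Let K be real, t = tanh(K), and let σ₁, …, σ₆ ∈ {−1, 1}. Then tanh(K·(σ₁+⋯+σ₆)) = a₁(t)·∑_{l} σ_l + a₃(t)·∑_{l₁<l₂<l₃} σ_{l₁}σ_{l₂}σ_{l₃} + a₅(t)·∑_{l₁<⋯<l₅} σ_{l₁}σ_{l₂}σ_{l₃}σ_{l₄}σ_{l₅}, where the sums are over the 6, 20 and 6 ways of choosing 1, 3 or 5 of the six spins. -/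
/-!
For spins `σᵢ = ±1` every power sum `∑ σᵢ ^ j` is either the number of spins (`j` even) or the
magnetisation `S = ∑ σᵢ` (`j` odd), so Newton's identities turn `e₃(σ)` and `e₅(σ)` into odd
polynomials in `S`. Both sides of the expansion are then odd functions of `S ∈ {-6, -4, …, 6}`,
and for `S = n ≥ 0` the formula `tanh (n K) = ((1 + t)ⁿ - (1 - t)ⁿ) / ((1 + t)ⁿ + (1 - t)ⁿ)`,
`t = tanh K`, makes each case a rational identity in `t`; the denominators of `a₁, a₃, a₅` come
from `(1 + t)⁴ + (1 - t)⁴ = 2 (1 + 6t² + t⁴)` and `(1 + t)⁶ + (1 - t)⁶ = 2 (1 + t²) (1 + 14t² + t⁴)`.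
-/

open scoped BigOperators

/-- Coefficient `a₁(t)`. -/
noncomputable def a1 (t : ℝ) : ℝ :=
  t * (1 + 16 * t ^ 2 + 46 * t ^ 4 + 16 * t ^ 6 + t ^ 8) /
    ((1 + t ^ 2) * (1 + 6 * t ^ 2 + t ^ 4) * (1 + 14 * t ^ 2 + t ^ 4))

/-- Coefficient `a₃(t)`. -/
noncomputable def a3 (t : ℝ) : ℝ :=
  -2 * t ^ 3 / ((1 + t ^ 2) * (1 + 14 * t ^ 2 + t ^ 4))

/-- Coefficient `a₅(t)`. -/
noncomputable def a5 (t : ℝ) : ℝ :=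
  16 * t ^ 5 / ((1 + t ^ 2) * (1 + 6 * t ^ 2 + t ^ 4) * (1 + 14 * t ^ 2 + t ^ 4))

open Finset MvPolynomial Real

section ElementarySymmetric

variable {ι K : Type*} [Fintype ι] [Field K]

lemma eval_esymm_eq_sum (σ : ι → K) (k : ℕ) :
    eval σ (esymm ι K k) = ∑ s ∈ powersetCard k univ, ∏ l ∈ s, σ l := by
  simp [esymm]

lemma pow_eq_ite_of_sq_eq_one {x : K} (hx : x ^ 2 = 1) (j : ℕ) :
    x ^ j = if Even j then 1 else x := by
  obtain ⟨m, rfl | rfl⟩ := Nat.even_or_odd' j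
  · simp [pow_mul, hx]
  · simp [pow_succ, pow_mul, hx, Nat.not_even_bit1]

lemma eval_psum_of_sq_eq_one {σ : ι → K} (hσ : ∀ i, σ i ^ 2 = 1) (j : ℕ) :
    eval σ (psum ι K j) = if Even j then (Fintype.card ι : K) else ∑ i, σ i := by
  simp only [psum, map_sum, map_pow, eval_X, pow_eq_ite_of_sq_eq_one (hσ _)]
  split_ifs <;> simp

lemma eval_mul_esymm_eq_sum (σ : ι → K) (k : ℕ) :
    k * eval σ (esymm ι K k) = (-1) ^ (k + 1) *
      ∑ a ∈ antidiagonal k with a.1 < k,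
        (-1) ^ a.1 * eval σ (esymm ι K a.1) * eval σ (psum ι K a.2) := by
  simpa using congrArg (eval σ) (mul_esymm_eq_sum ι K k)

lemma eval_esymm_one (σ : ι → K) : eval σ (esymm ι K 1) = ∑ i, σ i := by
  simp only [esymm_one, map_sum, eval_X]

variable {σ : ι → K}

lemma eval_mul_esymm_eq_sum_of_sq_eq_one (hσ : ∀ i, σ i ^ 2 = 1) (k : ℕ) :
    k * eval σ (esymm ι K k) = (-1) ^ (k + 1) * ∑ i ∈ range k,
      (-1) ^ i * eval σ (esymm ι K i) * if Even (k - i) then (Fintype.card ι : K) else ∑ i, σ i := by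
  rw [eval_mul_esymm_eq_sum, sum_filter, Nat.sum_antidiagonal_eq_sum_range_succ_mk, sum_range_succ,
    if_neg (lt_irrefl k), add_zero]
  refine congrArg _ (sum_congr rfl fun i hi => ?_)
  rw [if_pos (mem_range.mp hi), eval_psum_of_sq_eq_one hσ]

variable [CharZero K]

lemma eval_esymm_two_of_sq_eq_one (hσ : ∀ i, σ i ^ 2 = 1) :
    eval σ (esymm ι K 2) = ((∑ i, σ i) ^ 2 - Fintype.card ι) / 2 := by
  have h := eval_mul_esymm_eq_sum_of_sq_eq_one hσ 2
  norm_num [sum_range_succ, eval_esymm_one] at h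
  linear_combination (1 / 2 : K) * h

lemma eval_esymm_three_of_sq_eq_one (hσ : ∀ i, σ i ^ 2 = 1) :
    eval σ (esymm ι K 3) = ((∑ i, σ i) ^ 3 - (3 * Fintype.card ι - 2) * ∑ i, σ i) / 6 := by
  have h := eval_mul_esymm_eq_sum_of_sq_eq_one hσ 3
  norm_num [sum_range_succ, eval_esymm_one, eval_esymm_two_of_sq_eq_one hσ, Nat.even_iff] at h
  linear_combination (1 / 3 : K) * h

lemma eval_esymm_four_of_sq_eq_one (hσ : ∀ i, σ i ^ 2 = 1) :
    eval σ (esymm ι K 4) = ((∑ i, σ i) ^ 4 - (6 * Fintype.card ι - 8) * (∑ i, σ i) ^ 2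
      + 3 * Fintype.card ι ^ 2 - 6 * Fintype.card ι) / 24 := by
  have h := eval_mul_esymm_eq_sum_of_sq_eq_one hσ 4
  norm_num [sum_range_succ, eval_esymm_one, eval_esymm_two_of_sq_eq_one hσ,
    eval_esymm_three_of_sq_eq_one hσ, Nat.even_iff] at h
  linear_combination (1 / 4 : K) * h

lemma eval_esymm_five_of_sq_eq_one (hσ : ∀ i, σ i ^ 2 = 1) :
    eval σ (esymm ι K 5) = ((∑ i, σ i) ^ 5 - (10 * Fintype.card ι - 20) * (∑ i, σ i) ^ 3
      + (15 * Fintype.card ι ^ 2 - 50 * Fintype.card ι + 24) * ∑ i, σ i) / 120 := by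
  have h := eval_mul_esymm_eq_sum_of_sq_eq_one hσ 5
  norm_num [sum_range_succ, eval_esymm_one, eval_esymm_two_of_sq_eq_one hσ,
    eval_esymm_three_of_sq_eq_one hσ, eval_esymm_four_of_sq_eq_one hσ, Nat.even_iff] at h
  linear_combination (1 / 5 : K) * h

end ElementarySymmetric

section SpinSum

variable {ι : Type*} {σ : ι → ℤ}

lemma abs_sum_le_card_of_sign (s : Finset ι) (hσ : ∀ i, σ i = 1 ∨ σ i = -1) :
    |∑ i ∈ s, σ i| ≤ #s :=
  calc |∑ i ∈ s, σ i| ≤ ∑ i ∈ s, |σ i| := abs_sum_le_sum_abs _ _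
    _ = #s := by simp [abs_eq_abs.mpr ((hσ _).imp id id)]

lemma even_sum_add_card_of_sign (s : Finset ι) (hσ : ∀ i, σ i = 1 ∨ σ i = -1) :
    Even (∑ i ∈ s, σ i + #s) := by
  have h : ∑ i ∈ s, σ i + #s = ∑ i ∈ s, (σ i + 1) := by simp [sum_add_distrib]
  rw [h]
  refine even_sum _ fun i _ => ?_
  rcases hσ i with h | h <;> simp [h]

end SpinSum

lemma tanh_nat_mul (x : ℝ) (n : ℕ) : tanh (n * x) =
    ((1 + tanh x) ^ n - (1 - tanh x) ^ n) / ((1 + tanh x) ^ n + (1 - tanh x) ^ n) := by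
  have hc : 0 < exp x + exp (-x) := by positivity
  have hplus : 1 + tanh x = 2 * exp x / (exp x + exp (-x)) := by
    rw [tanh_eq_sinh_div_cosh, sinh_eq, cosh_eq]; field_simp; ring
  have hminus : 1 - tanh x = 2 * exp (-x) / (exp x + exp (-x)) := by
    rw [tanh_eq_sinh_div_cosh, sinh_eq, cosh_eq]; field_simp; ring
  rw [hplus, hminus, div_pow, div_pow, mul_pow, mul_pow, ← exp_nat_mul, ← exp_nat_mul,
    tanh_eq_sinh_div_cosh, sinh_eq, cosh_eq, mul_neg]
  field_simp

lemma tanh_nat_mul_of_even (K : ℝ) {n : ℕ} (hn : n ≤ 6) (hev : Even n) :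
    tanh (n * K) = a1 (tanh K) * n + a3 (tanh K) * ((n ^ 3 - 16 * n) / 6)
      + a5 (tanh K) * ((n ^ 5 - 40 * n ^ 3 + 264 * n) / 120) := by
  have hden := add_pos (pow_pos (show 0 < 1 + tanh K by linarith [neg_one_lt_tanh K]) n)
    (pow_pos (show 0 < 1 - tanh K by linarith [tanh_lt_one K]) n)
  rw [tanh_nat_mul]
  generalize tanh K = t at *
  unfold a1 a3 a5
  obtain ⟨k, rfl⟩ := hev
  have hk : k ≤ 3 := by omega
  interval_cases k <;> norm_num at hden ⊢ <;> field_simp <;> ring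

lemma tanh_int_mul_of_even (K : ℝ) {m : ℤ} (hm : |m| ≤ 6) (hev : Even m) :
    tanh (m * K) = a1 (tanh K) * m + a3 (tanh K) * ((m ^ 3 - 16 * m) / 6)
      + a5 (tanh K) * ((m ^ 5 - 40 * m ^ 3 + 264 * m) / 120) := by
  have hm' := abs_le.mp hm
  obtain ⟨n, rfl | rfl⟩ := m.eq_nat_or_neg
  · exact_mod_cast tanh_nat_mul_of_even K (by omega) (by exact_mod_cast hev)
  · have h := tanh_nat_mul_of_even K (n := n) (by omega) (by simpa using hev)
    push_cast
    rw [neg_mul, tanh_neg, h]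
    ring

/-- for real `K`, `t = tanh K`, and six spins `σ₁, …, σ₆ ∈ {−1, 1}`,
`tanh (K (σ₁ + ⋯ + σ₆))` equals `a₁(t)` times the sum of the 6 single spins, plus `a₃(t)`
times the sum of the 20 products of 3 of the spins, plus `a₅(t)` times the sum of the 6
products of 5 of the spins. -/
theorem tanh_six_spin_expansion (K : ℝ) (σ : Fin 6 → ℤ) (hσ : ∀ l, σ l = 1 ∨ σ l = -1) :
    Real.tanh (K * ((∑ l : Fin 6, σ l : ℤ) : ℝ)) =
      a1 (Real.tanh K) *
          (∑ s ∈ Finset.powersetCard 1 (Finset.univ : Finset (Fin 6)),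
            ∏ l ∈ s, ((σ l : ℤ) : ℝ)) +
        a3 (Real.tanh K) *
          (∑ s ∈ Finset.powersetCard 3 (Finset.univ : Finset (Fin 6)),
            ∏ l ∈ s, ((σ l : ℤ) : ℝ)) +
        a5 (Real.tanh K) *
          (∑ s ∈ Finset.powersetCard 5 (Finset.univ : Finset (Fin 6)),
            ∏ l ∈ s, ((σ l : ℤ) : ℝ)) := by
  have hsq : ∀ l, ((σ l : ℤ) : ℝ) ^ 2 = 1 := fun l => by rcases hσ l with h | h <;> simp [h]
  have hS := tanh_int_mul_of_even K (abs_sum_le_card_of_sign univ hσ)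
    (by simpa [Int.even_add, show Even (6 : ℤ) by decide] using
      even_sum_add_card_of_sign univ hσ)
  simp only [← eval_esymm_eq_sum, eval_esymm_one, eval_esymm_three_of_sq_eq_one hsq,
    eval_esymm_five_of_sq_eq_one hsq, Fintype.card_fin]
  push_cast at hS ⊢
  rw [mul_comm, hS]
  ring
end
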